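/- For the unique value function f of the 3PG, f(101000 | {1,2}) = 53/5; i.e., in the state where exactly the relations '1 beats 2' and '1 beats 3' have occurred and players 1 and 2 are in the ring, the value is 53/5. -/
import Mathlib

/-- A state of the three-player game (3PG): `beats i j` records whether the event
"player `i` has beaten player `j`" has occurred, and `ring` is the (unordered)
pair of the two players currently in the ring. -/
structure PGState where
  beats : Fin 3 → Fin 3 → Bool
  ring : Finset (Fin 3)
  card_ring : ring.card = 2

/-- A state is terminal if all six win-lose relations have occurred. -/
def PGState.Terminal (S : PGState) : Prop :=
  ∀ i j : Fin 3, i ≠ j → S.beats i j = true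

/-- The successor state in which player `w` beats player `l` in the current round
and the third player `t` enters the ring. -/
def PGState.succ (S : PGState) (w l t : Fin 3) (hwt : w ≠ t) : PGState :=
  ⟨fun i j => if i = w ∧ j = l then true else S.beats i j, {w, t}, Finset.card_pair hwt⟩

/-- `f` is a value function for the 3PG: it vanishes on terminal states and
satisfies the reduction rule `f S = 1 + (f S₁ + f S₂)/2` on non-terminal states,
where `S₁` and `S₂` are the two successors of `S`. -/
def IsValueFn (f : PGState → ℝ) : Prop :=
  (∀ S : PGState, S.Terminal → f S = 0) ∧
  ∀ (S : PGState) (t₁ t₂ t₃ : Fin 3) (_ : t₁ ≠ t₂) (h₁₃ : t₁ ≠ t₃) (h₂₃ : t₂ ≠ t₃),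
    S.ring = {t₁, t₂} → ¬ S.Terminal →
    f S = 1 + (f (S.succ t₁ t₂ t₃ h₁₃) + f (S.succ t₂ t₁ t₃ h₂₃)) / 2

/-- The win-lose record `(b₁b₂b₃b₄b₅b₆)`, where the six bits indicate whether the
relations "1 beats 2", "2 beats 1", "1 beats 3", "3 beats 1", "2 beats 3",
"3 beats 2" have occurred (players 1, 2, 3 are `0, 1, 2 : Fin 3`). -/
def mkBeats (b₁ b₂ b₃ b₄ b₅ b₆ : Bool) : Fin 3 → Fin 3 → Bool := fun i j =>
  if i = 0 ∧ j = 1 then b₁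
  else if i = 1 ∧ j = 0 then b₂
  else if i = 0 ∧ j = 2 then b₃
  else if i = 2 ∧ j = 0 then b₄
  else if i = 1 ∧ j = 2 then b₅
  else if i = 2 ∧ j = 1 then b₆
  else false

/-- The state `(b₁b₂b₃b₄b₅b₆ | {t₁, t₂})`. -/
def mkState (b₁ b₂ b₃ b₄ b₅ b₆ : Bool) (t₁ t₂ : Fin 3) (h : t₁ ≠ t₂ := by decide) :
    PGState :=
  ⟨mkBeats b₁ b₂ b₃ b₄ b₅ b₆, {t₁, t₂}, Finset.card_pair h⟩

lemma state_eq (S T : PGState) (hb : S.beats = T.beats) (hr : S.ring = T.ring) : S = T := by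
  cases S; cases T; simp_all

/-- `f(101000|{1,2}) = 53/5`. -/
theorem threePG_101000_12 (f : PGState → ℝ) (hf : IsValueFn f) :
    f (mkState true false true false false false 0 1) = 53 / 5 := by
  have q0a : PGState.succ (mkState true false true false false false 0 2) 0 2 1 (by decide) = (mkState true false true false false false 0 1) := state_eq _ _ (by decide) (by decide)
  have q0b : PGState.succ (mkState true false true false false false 0 2) 2 0 1 (by decide) = (mkState true false true true false false 1 2) := state_eq _ _ (by decide) (by decide)
  have e0 := hf.2 (mkState true false true false false false 0 2) 0 2 1 (by decide) (by decide) (by decide) rfl (by unfold PGState.Terminal; decide)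
  rw [q0a, q0b] at e0
  have q1a : PGState.succ (mkState true false true false false false 0 1) 0 1 2 (by decide) = (mkState true false true false false false 0 2) := state_eq _ _ (by decide) (by decide)
  have q1b : PGState.succ (mkState true false true false false false 0 1) 1 0 2 (by decide) = (mkState true true true false false false 1 2) := state_eq _ _ (by decide) (by decide)
  have e1 := hf.2 (mkState true false true false false false 0 1) 0 1 2 (by decide) (by decide) (by decide) rfl (by unfold PGState.Terminal; decide)
  rw [q1a, q1b] at e1
  have q2a : PGState.succ (mkState true true true false false false 1 2) 1 2 0 (by decide) = (mkState true true true false true false 0 1) := state_eq _ _ (by decide) (by decide)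
  have q2b : PGState.succ (mkState true true true false false false 1 2) 2 1 0 (by decide) = (mkState true true true false false true 0 2) := state_eq _ _ (by decide) (by decide)
  have e2 := hf.2 (mkState true true true false false false 1 2) 1 2 0 (by decide) (by decide) (by decide) rfl (by unfold PGState.Terminal; decide)
  rw [q2a, q2b] at e2
  have q3a : PGState.succ (mkState true false true true false false 1 2) 1 2 0 (by decide) = (mkState true false true true true false 0 1) := state_eq _ _ (by decide) (by decide)
  have q3b : PGState.succ (mkState true false true true false false 1 2) 2 1 0 (by decide) = (mkState true false true true false true 0 2) := state_eq _ _ (by decide) (by decide)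
  have e3 := hf.2 (mkState true false true true false false 1 2) 1 2 0 (by decide) (by decide) (by decide) rfl (by unfold PGState.Terminal; decide)
  rw [q3a, q3b] at e3
  have q4a : PGState.succ (mkState true true true false true false 0 1) 0 1 2 (by decide) = (mkState true true true false true false 0 2) := state_eq _ _ (by decide) (by decide)
  have q4b : PGState.succ (mkState true true true false true false 0 1) 1 0 2 (by decide) = (mkState true true true false true false 1 2) := state_eq _ _ (by decide) (by decide)
  have e4 := hf.2 (mkState true true true false true false 0 1) 0 1 2 (by decide) (by decide) (by decide) rfl (by unfold PGState.Terminal; decide)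
  rw [q4a, q4b] at e4
  have q5a : PGState.succ (mkState true true true false true false 0 2) 0 2 1 (by decide) = (mkState true true true false true false 0 1) := state_eq _ _ (by decide) (by decide)
  have q5b : PGState.succ (mkState true true true false true false 0 2) 2 0 1 (by decide) = (mkState true true true true true false 1 2) := state_eq _ _ (by decide) (by decide)
  have e5 := hf.2 (mkState true true true false true false 0 2) 0 2 1 (by decide) (by decide) (by decide) rfl (by unfold PGState.Terminal; decide)
  rw [q5a, q5b] at e5
  have q6a : PGState.succ (mkState true true true false true false 1 2) 1 2 0 (by decide) = (mkState true true true false true false 0 1) := state_eq _ _ (by decide) (by decide)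
  have q6b : PGState.succ (mkState true true true false true false 1 2) 2 1 0 (by decide) = (mkState true true true false true true 0 2) := state_eq _ _ (by decide) (by decide)
  have e6 := hf.2 (mkState true true true false true false 1 2) 1 2 0 (by decide) (by decide) (by decide) rfl (by unfold PGState.Terminal; decide)
  rw [q6a, q6b] at e6
  have q7a : PGState.succ (mkState true false true true true false 0 1) 0 1 2 (by decide) = (mkState true false true true true false 0 2) := state_eq _ _ (by decide) (by decide)
  have q7b : PGState.succ (mkState true false true true true false 0 1) 1 0 2 (by decide) = (mkState true true true true true false 1 2) := state_eq _ _ (by decide) (by decide)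
  have e7 := hf.2 (mkState true false true true true false 0 1) 0 1 2 (by decide) (by decide) (by decide) rfl (by unfold PGState.Terminal; decide)
  rw [q7a, q7b] at e7
  have q8a : PGState.succ (mkState true false true true true false 0 2) 0 2 1 (by decide) = (mkState true false true true true false 0 1) := state_eq _ _ (by decide) (by decide)
  have q8b : PGState.succ (mkState true false true true true false 0 2) 2 0 1 (by decide) = (mkState true false true true true false 1 2) := state_eq _ _ (by decide) (by decide)
  have e8 := hf.2 (mkState true false true true true false 0 2) 0 2 1 (by decide) (by decide) (by decide) rfl (by unfold PGState.Terminal; decide)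
  rw [q8a, q8b] at e8
  have q9a : PGState.succ (mkState true false true true true false 1 2) 1 2 0 (by decide) = (mkState true false true true true false 0 1) := state_eq _ _ (by decide) (by decide)
  have q9b : PGState.succ (mkState true false true true true false 1 2) 2 1 0 (by decide) = (mkState true false true true true true 0 2) := state_eq _ _ (by decide) (by decide)
  have e9 := hf.2 (mkState true false true true true false 1 2) 1 2 0 (by decide) (by decide) (by decide) rfl (by unfold PGState.Terminal; decide)
  rw [q9a, q9b] at e9
  have q10a : PGState.succ (mkState true true true true true false 0 1) 0 1 2 (by decide) = (mkState true true true true true false 0 2) := state_eq _ _ (by decide) (by decide)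
  have q10b : PGState.succ (mkState true true true true true false 0 1) 1 0 2 (by decide) = (mkState true true true true true false 1 2) := state_eq _ _ (by decide) (by decide)
  have e10 := hf.2 (mkState true true true true true false 0 1) 0 1 2 (by decide) (by decide) (by decide) rfl (by unfold PGState.Terminal; decide)
  rw [q10a, q10b] at e10
  have q11a : PGState.succ (mkState true true true true true false 0 2) 0 2 1 (by decide) = (mkState true true true true true false 0 1) := state_eq _ _ (by decide) (by decide)
  have q11b : PGState.succ (mkState true true true true true false 0 2) 2 0 1 (by decide) = (mkState true true true true true false 1 2) := state_eq _ _ (by decide) (by decide)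
  have e11 := hf.2 (mkState true true true true true false 0 2) 0 2 1 (by decide) (by decide) (by decide) rfl (by unfold PGState.Terminal; decide)
  rw [q11a, q11b] at e11
  have q12a : PGState.succ (mkState true true true true true false 1 2) 1 2 0 (by decide) = (mkState true true true true true false 0 1) := state_eq _ _ (by decide) (by decide)
  have q12b : PGState.succ (mkState true true true true true false 1 2) 2 1 0 (by decide) = (mkState true true true true true true 0 2) := state_eq _ _ (by decide) (by decide)
  have e12 := hf.2 (mkState true true true true true false 1 2) 1 2 0 (by decide) (by decide) (by decide) rfl (by unfold PGState.Terminal; decide)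
  rw [q12a, q12b] at e12
  have q13a : PGState.succ (mkState true true true false false true 0 1) 0 1 2 (by decide) = (mkState true true true false false true 0 2) := state_eq _ _ (by decide) (by decide)
  have q13b : PGState.succ (mkState true true true false false true 0 1) 1 0 2 (by decide) = (mkState true true true false false true 1 2) := state_eq _ _ (by decide) (by decide)
  have e13 := hf.2 (mkState true true true false false true 0 1) 0 1 2 (by decide) (by decide) (by decide) rfl (by unfold PGState.Terminal; decide)
  rw [q13a, q13b] at e13
  have q14a : PGState.succ (mkState true true true false false true 0 2) 0 2 1 (by decide) = (mkState true true true false false true 0 1) := state_eq _ _ (by decide) (by decide)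
  have q14b : PGState.succ (mkState true true true false false true 0 2) 2 0 1 (by decide) = (mkState true true true true false true 1 2) := state_eq _ _ (by decide) (by decide)
  have e14 := hf.2 (mkState true true true false false true 0 2) 0 2 1 (by decide) (by decide) (by decide) rfl (by unfold PGState.Terminal; decide)
  rw [q14a, q14b] at e14
  have q15a : PGState.succ (mkState true true true false false true 1 2) 1 2 0 (by decide) = (mkState true true true false true true 0 1) := state_eq _ _ (by decide) (by decide)
  have q15b : PGState.succ (mkState true true true false false true 1 2) 2 1 0 (by decide) = (mkState true true true false false true 0 2) := state_eq _ _ (by decide) (by decide)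
  have e15 := hf.2 (mkState true true true false false true 1 2) 1 2 0 (by decide) (by decide) (by decide) rfl (by unfold PGState.Terminal; decide)
  rw [q15a, q15b] at e15
  have q16a : PGState.succ (mkState true false true true false true 0 2) 0 2 1 (by decide) = (mkState true false true true false true 0 1) := state_eq _ _ (by decide) (by decide)
  have q16b : PGState.succ (mkState true false true true false true 0 2) 2 0 1 (by decide) = (mkState true false true true false true 1 2) := state_eq _ _ (by decide) (by decide)
  have e16 := hf.2 (mkState true false true true false true 0 2) 0 2 1 (by decide) (by decide) (by decide) rfl (by unfold PGState.Terminal; decide)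
  rw [q16a, q16b] at e16
  have q17a : PGState.succ (mkState true false true true false true 0 1) 0 1 2 (by decide) = (mkState true false true true false true 0 2) := state_eq _ _ (by decide) (by decide)
  have q17b : PGState.succ (mkState true false true true false true 0 1) 1 0 2 (by decide) = (mkState true true true true false true 1 2) := state_eq _ _ (by decide) (by decide)
  have e17 := hf.2 (mkState true false true true false true 0 1) 0 1 2 (by decide) (by decide) (by decide) rfl (by unfold PGState.Terminal; decide)
  rw [q17a, q17b] at e17
  have q18a : PGState.succ (mkState true false true true false true 1 2) 1 2 0 (by decide) = (mkState true false true true true true 0 1) := state_eq _ _ (by decide) (by decide)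
  have q18b : PGState.succ (mkState true false true true false true 1 2) 2 1 0 (by decide) = (mkState true false true true false true 0 2) := state_eq _ _ (by decide) (by decide)
  have e18 := hf.2 (mkState true false true true false true 1 2) 1 2 0 (by decide) (by decide) (by decide) rfl (by unfold PGState.Terminal; decide)
  rw [q18a, q18b] at e18
  have q19a : PGState.succ (mkState true true true true false true 1 2) 1 2 0 (by decide) = (mkState true true true true true true 0 1) := state_eq _ _ (by decide) (by decide)
  have q19b : PGState.succ (mkState true true true true false true 1 2) 2 1 0 (by decide) = (mkState true true true true false true 0 2) := state_eq _ _ (by decide) (by decide)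
  have e19 := hf.2 (mkState true true true true false true 1 2) 1 2 0 (by decide) (by decide) (by decide) rfl (by unfold PGState.Terminal; decide)
  rw [q19a, q19b] at e19
  have q20a : PGState.succ (mkState true true true true false true 0 1) 0 1 2 (by decide) = (mkState true true true true false true 0 2) := state_eq _ _ (by decide) (by decide)
  have q20b : PGState.succ (mkState true true true true false true 0 1) 1 0 2 (by decide) = (mkState true true true true false true 1 2) := state_eq _ _ (by decide) (by decide)
  have e20 := hf.2 (mkState true true true true false true 0 1) 0 1 2 (by decide) (by decide) (by decide) rfl (by unfold PGState.Terminal; decide)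
  rw [q20a, q20b] at e20
  have q21a : PGState.succ (mkState true true true true false true 0 2) 0 2 1 (by decide) = (mkState true true true true false true 0 1) := state_eq _ _ (by decide) (by decide)
  have q21b : PGState.succ (mkState true true true true false true 0 2) 2 0 1 (by decide) = (mkState true true true true false true 1 2) := state_eq _ _ (by decide) (by decide)
  have e21 := hf.2 (mkState true true true true false true 0 2) 0 2 1 (by decide) (by decide) (by decide) rfl (by unfold PGState.Terminal; decide)
  rw [q21a, q21b] at e21
  have q22a : PGState.succ (mkState true true true false true true 0 1) 0 1 2 (by decide) = (mkState true true true false true true 0 2) := state_eq _ _ (by decide) (by decide)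
  have q22b : PGState.succ (mkState true true true false true true 0 1) 1 0 2 (by decide) = (mkState true true true false true true 1 2) := state_eq _ _ (by decide) (by decide)
  have e22 := hf.2 (mkState true true true false true true 0 1) 0 1 2 (by decide) (by decide) (by decide) rfl (by unfold PGState.Terminal; decide)
  rw [q22a, q22b] at e22
  have q23a : PGState.succ (mkState true true true false true true 0 2) 0 2 1 (by decide) = (mkState true true true false true true 0 1) := state_eq _ _ (by decide) (by decide)
  have q23b : PGState.succ (mkState true true true false true true 0 2) 2 0 1 (by decide) = (mkState true true true true true true 1 2) := state_eq _ _ (by decide) (by decide)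
  have e23 := hf.2 (mkState true true true false true true 0 2) 0 2 1 (by decide) (by decide) (by decide) rfl (by unfold PGState.Terminal; decide)
  rw [q23a, q23b] at e23
  have q24a : PGState.succ (mkState true true true false true true 1 2) 1 2 0 (by decide) = (mkState true true true false true true 0 1) := state_eq _ _ (by decide) (by decide)
  have q24b : PGState.succ (mkState true true true false true true 1 2) 2 1 0 (by decide) = (mkState true true true false true true 0 2) := state_eq _ _ (by decide) (by decide)
  have e24 := hf.2 (mkState true true true false true true 1 2) 1 2 0 (by decide) (by decide) (by decide) rfl (by unfold PGState.Terminal; decide)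
  rw [q24a, q24b] at e24
  have q25a : PGState.succ (mkState true false true true true true 0 1) 0 1 2 (by decide) = (mkState true false true true true true 0 2) := state_eq _ _ (by decide) (by decide)
  have q25b : PGState.succ (mkState true false true true true true 0 1) 1 0 2 (by decide) = (mkState true true true true true true 1 2) := state_eq _ _ (by decide) (by decide)
  have e25 := hf.2 (mkState true false true true true true 0 1) 0 1 2 (by decide) (by decide) (by decide) rfl (by unfold PGState.Terminal; decide)
  rw [q25a, q25b] at e25
  have q26a : PGState.succ (mkState true false true true true true 0 2) 0 2 1 (by decide) = (mkState true false true true true true 0 1) := state_eq _ _ (by decide) (by decide)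
  have q26b : PGState.succ (mkState true false true true true true 0 2) 2 0 1 (by decide) = (mkState true false true true true true 1 2) := state_eq _ _ (by decide) (by decide)
  have e26 := hf.2 (mkState true false true true true true 0 2) 0 2 1 (by decide) (by decide) (by decide) rfl (by unfold PGState.Terminal; decide)
  rw [q26a, q26b] at e26
  have q27a : PGState.succ (mkState true false true true true true 1 2) 1 2 0 (by decide) = (mkState true false true true true true 0 1) := state_eq _ _ (by decide) (by decide)
  have q27b : PGState.succ (mkState true false true true true true 1 2) 2 1 0 (by decide) = (mkState true false true true true true 0 2) := state_eq _ _ (by decide) (by decide)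
  have e27 := hf.2 (mkState true false true true true true 1 2) 1 2 0 (by decide) (by decide) (by decide) rfl (by unfold PGState.Terminal; decide)
  rw [q27a, q27b] at e27
  have e28 : f (mkState true true true true true true 0 1) = 0 := hf.1 _ (by unfold PGState.Terminal; decide)
  have e29 : f (mkState true true true true true true 0 2) = 0 := hf.1 _ (by unfold PGState.Terminal; decide)
  have e30 : f (mkState true true true true true true 1 2) = 0 := hf.1 _ (by unfold PGState.Terminal; decide)
  linarith [e0, e1, e2, e3, e4, e5, e6, e7, e8, e9, e10, e11, e12, e13, e14, e15, e16, e17, e18, e19, e20, e21, e22, e23, e24, e25, e26, e27, e28, e29, e30]
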